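/- arXiv:2212.07690 — 5 statements merged into one kernel-verified Lean document; each statement's English description precedes it below -/
import Mathlib

section
/- Let p be an odd prime not dividing 2PQD. Then D^{(p-1)/2} + Q^{(p-1)/2} ≡ V_{(p-1)/2} · U_{(p+1)/2} (mod p). -/
def lucasU (P Q : ℤ) : ℕ → ℤ
  | 0 => 0
  | 1 => 1
  | n + 2 => P * lucasU P Q (n + 1) - Q * lucasU P Q n

def lucasV (P Q : ℤ) : ℕ → ℤ
  | 0 => 2
  | 1 => P
  | n + 2 => P * lucasV P Q (n + 1) - Q * lucasV P Q n

lemma adjoinRoot_sq {K : Type} [CommRing K] (d : K) :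
    (AdjoinRoot.root (Polynomial.X ^ 2 - Polynomial.C d)) ^ 2
      = AdjoinRoot.of (Polynomial.X ^ 2 - Polynomial.C d) d := by
  have h0 := AdjoinRoot.mk_self (f := Polynomial.X ^ 2 - Polynomial.C d)
  rw [map_sub, map_pow, AdjoinRoot.mk_X, AdjoinRoot.mk_C, sub_eq_zero] at h0
  exact h0

lemma lucas_key {R : Type} [Field R] (p : ℕ) [hp : Fact p.Prime] (hodd : p ≠ 2)
    (P Q : ℤ) (ι : ZMod p →+* R) (s : R)
    (hs : s ^ 2 = ι (((P ^ 2 - 4 * Q : ℤ) : ZMod p)))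
    (hD : (((P ^ 2 - 4 * Q : ℤ) : ZMod p)) ≠ 0) :
    ι ((((P ^ 2 - 4 * Q) ^ ((p - 1) / 2) + Q ^ ((p - 1) / 2) : ℤ)) : ZMod p)
      = ι (((lucasV P Q ((p - 1) / 2) * lucasU P Q ((p + 1) / 2) : ℤ) : ZMod p)) := by
  haveI : CharP R p := charP_of_injective_ringHom ι.injective p
  have hinj := ι.injective
  have hp3 : 3 ≤ p := by
    have := hp.out.two_le
    omega
  have hpodd : Odd p := hp.out.odd_of_ne_two hodd
  obtain ⟨m, hm⟩ := hpodd
  have hm1 : (p - 1) / 2 = m := by omega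
  have hm2 : (p + 1) / 2 = m + 1 := by omega
  -- basic elements
  set a : R := ι ((P : ZMod p)) with ha
  set q : R := ι ((Q : ZMod p)) with hq
  set dd : R := ι (((P ^ 2 - 4 * Q : ℤ) : ZMod p)) with hdd0
  have hddeq : dd = a ^ 2 - 4 * q := by
    rw [hdd0, ha, hq]
    have : ((P ^ 2 - 4 * Q : ℤ) : ZMod p) = ((P : ZMod p)) ^ 2 - 4 * ((Q : ZMod p)) := by
      push_cast; ring
    rw [this]
    simp [map_sub, map_pow, map_mul, map_ofNat]
  have h2 : (2 : ZMod p) ≠ 0 := by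
    have : ¬ (p : ℤ) ∣ 2 := by
      intro h
      have := Int.le_of_dvd (by norm_num) h
      omega
    intro h
    apply this
    have : ((2 : ℤ) : ZMod p) = 0 := by push_cast; exact h
    exact_mod_cast (ZMod.intCast_zmod_eq_zero_iff_dvd 2 p).mp this
  set c : R := ι ((2 : ZMod p)⁻¹) with hcdef
  have hc : c * 2 = 1 := by
    rw [hcdef]
    have : ((2 : ZMod p)⁻¹ * 2 : ZMod p) = 1 := inv_mul_cancel₀ h2
    calc ι ((2 : ZMod p)⁻¹) * 2 = ι ((2 : ZMod p)⁻¹) * ι (2 : ZMod p) := by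
          rw [map_ofNat]
      _ = ι ((2 : ZMod p)⁻¹ * 2) := (map_mul ι _ _).symm
      _ = 1 := by rw [this, map_one]
  set α : R := c * (a + s) with hα
  set β : R := c * (a - s) with hβ
  have hsum : α + β = a := by rw [hα, hβ]; linear_combination a * hc
  have hdiff : α - β = s := by rw [hα, hβ]; linear_combination s * hc
  have hmul : α * β = q := by
    rw [hα, hβ]
    linear_combination (-c ^ 2) * hs + (-c ^ 2) * hddeq + q * (c * 2 + 1) * hc
  -- main induction
  have UV : ∀ n : ℕ,
      ι ((lucasU P Q n : ℤ) : ZMod p) * s = α ^ n - β ^ n ∧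
      ι ((lucasV P Q n : ℤ) : ZMod p) = α ^ n + β ^ n := by
    intro n
    induction n using Nat.twoStepInduction with
    | zero =>
      constructor
      · simp [lucasU]
      · show ι (((2 : ℤ) : ZMod p)) = _
        push_cast
        rw [map_ofNat]
        norm_num
    | one =>
      constructor
      · simp only [lucasU, Int.cast_one, map_one, one_mul, pow_one]
        exact hdiff.symm
      · simp only [lucasV, pow_one]
        exact hsum.symm
    | more n ih1 ih2 =>
      obtain ⟨hU0, hV0⟩ := ih1
      obtain ⟨hU1, hV1⟩ := ih2
      have hcastU : ι ((lucasU P Q (n + 2) : ℤ) : ZMod p)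
          = a * ι ((lucasU P Q (n + 1) : ℤ) : ZMod p) - q * ι ((lucasU P Q n : ℤ) : ZMod p) := by
        show ι (((P * lucasU P Q (n + 1) - Q * lucasU P Q n : ℤ) : ZMod p)) = _
        push_cast
        rw [map_sub, map_mul, map_mul, ha, hq]
      have hcastV : ι ((lucasV P Q (n + 2) : ℤ) : ZMod p)
          = a * ι ((lucasV P Q (n + 1) : ℤ) : ZMod p) - q * ι ((lucasV P Q n : ℤ) : ZMod p) := by
        show ι (((P * lucasV P Q (n + 1) - Q * lucasV P Q n : ℤ) : ZMod p)) = _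
        push_cast
        rw [map_sub, map_mul, map_mul, ha, hq]
      constructor
      · rw [hcastU, ← hsum, ← hmul]
        linear_combination (α + β) * hU1 - (α * β) * hU0
      · rw [hcastV, ← hsum, ← hmul]
        linear_combination (α + β) * hV1 - (α * β) * hV0
  obtain ⟨hUm1, -⟩ := UV (m + 1)
  obtain ⟨-, hVm⟩ := UV m
  have hs0 : s ≠ 0 := by
    intro h
    apply hD
    apply hinj
    rw [map_zero, ← hdd0, ← hs, h]
    ring
  rw [hm1, hm2]
  -- key computation: α^p - β^p = s^p = dd^m * s
  have hfrob : α ^ p - β ^ p = dd ^ m * s := by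
    rw [← sub_pow_char, hdiff, hm]
    rw [pow_succ, pow_mul]
    rw [hs]
  apply mul_right_cancel₀ hs0
  have hmulcast : ι (((lucasV P Q m * lucasU P Q (m + 1) : ℤ)) : ZMod p)
      = ι ((lucasV P Q m : ℤ) : ZMod p) * ι ((lucasU P Q (m + 1) : ℤ) : ZMod p) := by
    rw [Int.cast_mul, map_mul]
  rw [hmulcast, mul_assoc, hUm1, hVm]
  have lhs_eq : ι (((P ^ 2 - 4 * Q) ^ m + Q ^ m : ℤ) : ZMod p) = dd ^ m + q ^ m := by
    have : (((P ^ 2 - 4 * Q) ^ m + Q ^ m : ℤ) : ZMod p)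
        = ((P ^ 2 - 4 * Q : ℤ) : ZMod p) ^ m + ((Q : ZMod p)) ^ m := by push_cast; ring
    rw [this, map_add, map_pow, map_pow, ← hdd0, ← hq]
  rw [lhs_eq]
  have expand : (α ^ m + β ^ m) * (α ^ (m + 1) - β ^ (m + 1))
      = (α ^ (2 * m + 1) - β ^ (2 * m + 1)) + α ^ m * β ^ m * (α - β) := by ring
  rw [expand, ← hm, hfrob, ← mul_pow, hmul, hdiff]
  ring

theorem lucasVU_half_mod (P Q : ℤ) (p : ℕ) (hp : p.Prime) (hodd : p ≠ 2)
    (hdvd : ¬ (p : ℤ) ∣ 2 * P * Q * (P ^ 2 - 4 * Q)) :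
    (P ^ 2 - 4 * Q) ^ ((p - 1) / 2) + Q ^ ((p - 1) / 2) ≡
      lucasV P Q ((p - 1) / 2) * lucasU P Q ((p + 1) / 2) [ZMOD p] := by
  haveI : Fact p.Prime := ⟨hp⟩
  have hD : (((P ^ 2 - 4 * Q : ℤ) : ZMod p)) ≠ 0 := by
    rw [Ne, ZMod.intCast_zmod_eq_zero_iff_dvd]
    intro h
    exact hdvd (Dvd.dvd.mul_left h _)
  rw [← ZMod.intCast_eq_intCast_iff]
  by_cases hsq : ∃ e : ZMod p, e ^ 2 = ((P ^ 2 - 4 * Q : ℤ) : ZMod p)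
  · obtain ⟨e, he⟩ := hsq
    have := lucas_key (R := ZMod p) p hodd P Q (RingHom.id _) e (by simpa using he) hD
    simpa using this
  · push_neg at hsq
    set d : ZMod p := ((P ^ 2 - 4 * Q : ℤ) : ZMod p) with hd
    have hirr : Irreducible (Polynomial.X ^ 2 - Polynomial.C d) :=
      X_pow_sub_C_irreducible_of_prime Nat.prime_two (fun b => hsq b)
    haveI : Fact (Irreducible (Polynomial.X ^ 2 - Polynomial.C d)) := ⟨hirr⟩
    set f : Polynomial (ZMod p) := Polynomial.X ^ 2 - Polynomial.C d with hf
    have hroot : (AdjoinRoot.root f) ^ 2 = AdjoinRoot.of f d := adjoinRoot_sq d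
    have := lucas_key (R := AdjoinRoot f) p hodd P Q (AdjoinRoot.of f)
      (AdjoinRoot.root f) (by rw [hroot]) hD
    exact (AdjoinRoot.of f).injective this
end

section
/- Let p be an odd prime not dividing 2PQD. Then P·(P^{p-1} + Q^{(p-1)/2}) ≡ V_{(p-1)/2} · V_{(p+1)/2} (mod p). -/
lemma lucasV_mul (P Q : ℤ) : ∀ n k, lucasV P Q (n + k) * lucasV P Q n
    = lucasV P Q (2 * n + k) + Q ^ n * lucasV P Q k := by
  intro n
  induction n using Nat.twoStepInduction with
  | zero => intro k; simp [lucasV]; ring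
  | one =>
    intro k
    have h1 : 1 + k = k + 1 := by omega
    have h2 : 2 * 1 + k = k + 2 := by omega
    rw [h1, h2]
    show lucasV P Q (k + 1) * lucasV P Q 1 = lucasV P Q (k + 2) + Q ^ 1 * lucasV P Q k
    rw [show lucasV P Q (k + 2) = P * lucasV P Q (k + 1) - Q * lucasV P Q k from rfl,
      show lucasV P Q 1 = P from rfl]
    ring
  | more n ih1 ih2 =>
    intro k
    have e1 : n + 2 + k = (n + 1) + (k + 1) := by omega
    have e2 : n + 2 + k = n + (k + 2) := by omega
    have eV : lucasV P Q (n + 2) = P * lucasV P Q (n + 1) - Q * lucasV P Q n := rfl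
    have eK : lucasV P Q (k + 2) = P * lucasV P Q (k + 1) - Q * lucasV P Q k := rfl
    have e3 : 2 * (n + 2) + k = (2 * n + k + 2) + 2 := by omega
    have e4 : 2 * (n + 1) + (k + 1) = 2 * n + k + 3 := by omega
    have e5 : 2 * n + (k + 2) = 2 * n + k + 2 := by omega
    have big : lucasV P Q (2 * n + k + 4)
        = P * lucasV P Q (2 * n + k + 3) - Q * lucasV P Q (2 * n + k + 2) := rfl
    have A := ih2 (k + 1)
    have B := ih1 (k + 2)
    rw [e4] at A
    rw [e5] at B
    calc lucasV P Q (n + 2 + k) * lucasV P Q (n + 2)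
        = P * (lucasV P Q ((n + 1) + (k + 1)) * lucasV P Q (n + 1))
          - Q * (lucasV P Q (n + (k + 2)) * lucasV P Q n) := by
          rw [← e1, ← e2, eV]; ring
      _ = P * (lucasV P Q (2 * n + k + 3) + Q ^ (n + 1) * lucasV P Q (k + 1))
          - Q * (lucasV P Q (2 * n + k + 2) + Q ^ n * lucasV P Q (k + 2)) := by rw [A, B]
      _ = lucasV P Q (2 * (n + 2) + k) + Q ^ (n + 2) * lucasV P Q k := by
          rw [e3, show (2 * n + k + 2) + 2 = 2 * n + k + 4 from rfl, big, eK]; ring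

lemma lucasV_eq_pow {R : Type*} [CommRing R] (P Q : ℤ) (α β : R)
    (hs : α + β = (P : R)) (hm : α * β = (Q : R)) :
    ∀ n, ((lucasV P Q n : R)) = α ^ n + β ^ n := by
  intro n
  induction n using Nat.twoStepInduction with
  | zero => simp [lucasV]; norm_num
  | one => simp [lucasV, hs]
  | more n ih1 ih2 =>
    rw [show lucasV P Q (n + 2) = P * lucasV P Q (n + 1) - Q * lucasV P Q n from rfl]
    push_cast
    rw [ih1, ih2, ← hs, ← hm]; ring

lemma lucasV_prime_mod (P Q : ℤ) (p : ℕ) (hp : p.Prime) :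
    ((lucasV P Q p : ZMod p)) = (P : ZMod p) ^ p := by
  haveI : Fact p.Prime := ⟨hp⟩
  set f : Polynomial (ZMod p) :=
    Polynomial.X ^ 2 - Polynomial.C (P : ZMod p) * Polynomial.X + Polynomial.C (Q : ZMod p)
    with hf
  have hdeg : f.degree = 2 := by
    unfold f
    compute_degree!
  set R := AdjoinRoot f
  set α : R := AdjoinRoot.root f with hα
  set β : R := AdjoinRoot.of f (P : ZMod p) - α with hβ
  have hroot : α ^ 2 - AdjoinRoot.of f (P : ZMod p) * α + AdjoinRoot.of f (Q : ZMod p) = 0 := by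
    have h0 := AdjoinRoot.eval₂_root f
    rw [hf] at h0
    simp only [Polynomial.eval₂_add, Polynomial.eval₂_sub, Polynomial.eval₂_mul,
      Polynomial.eval₂_pow, Polynomial.eval₂_X, Polynomial.eval₂_C] at h0
    exact h0
  have hinj : Function.Injective ((↑) : ZMod p → R) :=
    AdjoinRoot.coe_injective (by rw [hdeg]; norm_num)
  have halg : (algebraMap (ZMod p) R) = AdjoinRoot.of f := AdjoinRoot.algebraMap_eq f
  haveI : CharP R p := by
    refine charP_of_injective_algebraMap (R := ZMod p) ?_ p
    rw [halg]; exact hinj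
  have hP : ((P : ZMod p) : R) = AdjoinRoot.of f (P : ZMod p) := rfl
  have hQ : ((Q : ZMod p) : R) = AdjoinRoot.of f (Q : ZMod p) := rfl
  have hs : α + β = ((P : R)) := by
    rw [hβ]
    rw [← map_intCast (AdjoinRoot.of f) P]; ring
  have hm : α * β = ((Q : R)) := by
    rw [← map_intCast (AdjoinRoot.of f) Q, hβ]
    have : α * (AdjoinRoot.of f (P : ZMod p) - α)
        = -(α ^ 2 - AdjoinRoot.of f (P : ZMod p) * α + AdjoinRoot.of f (Q : ZMod p))
          + AdjoinRoot.of f (Q : ZMod p) := by ring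
    rw [this, hroot]; ring
  have key : ((lucasV P Q p : R)) = ((P : R)) ^ p := by
    rw [lucasV_eq_pow P Q α β hs hm p, ← hs, add_pow_char]
  apply hinj
  have c1 : ((lucasV P Q p : ZMod p) : R) = ((lucasV P Q p : ℤ) : R) :=
    map_intCast (AdjoinRoot.of f) _
  have c2 : (((P : ZMod p) ^ p : ZMod p) : R) = ((P : R)) ^ p := by
    rw [show (((P : ZMod p) ^ p : ZMod p) : R) = AdjoinRoot.of f ((P : ZMod p) ^ p) from rfl,
      map_pow, map_intCast]
  rw [c1, c2, key]

theorem lucasVV_half_mod (P Q : ℤ) (p : ℕ) (hp : p.Prime) (hodd : p ≠ 2)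
    (hdvd : ¬ (p : ℤ) ∣ 2 * P * Q * (P ^ 2 - 4 * Q)) :
    P * (P ^ (p - 1) + Q ^ ((p - 1) / 2)) ≡
      lucasV P Q ((p - 1) / 2) * lucasV P Q ((p + 1) / 2) [ZMOD p] := by
  set m := (p - 1) / 2 with hm
  have hp2 : 2 ≤ p := hp.two_le
  have hpodd : p % 2 = 1 := Nat.odd_iff.mp (hp.odd_of_ne_two hodd)
  have hpm : p = 2 * m + 1 := by omega
  have hm1 : (p + 1) / 2 = m + 1 := by omega
  rw [hm1]
  have key := lucasV_mul P Q m 1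
  rw [show m + 1 = m + 1 from rfl, show 2 * m + 1 = p from hpm.symm,
    show lucasV P Q 1 = P from rfl] at key
  have comm : lucasV P Q m * lucasV P Q (m + 1) = lucasV P Q p + Q ^ m * P := by
    rw [← key]; ring
  rw [comm]
  have hVp : ((lucasV P Q p : ZMod p)) = (P : ZMod p) ^ p := lucasV_prime_mod P Q p hp
  rw [Int.ModEq]
  rw [← ZMod.intCast_eq_intCast_iff'] at *
  push_cast
  rw [hVp]
  have : (P : ZMod p) ^ p = (P : ZMod p) * (P : ZMod p) ^ (p - 1) := by
    rw [← pow_succ']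
    congr 1
    omega
  rw [this]
  ring
end

section
/- Let p be an odd prime not dividing 2PQD. Then D^{(p-1)/2} - Q^{(p-1)/2} ≡ U_{(p-1)/2} · V_{(p+1)/2} (mod p). -/
section Binet

variable {A : Type*} [CommRing A] {P Q : ℤ} {α β : A}

theorem lucasU_mul_sub (hsum : α + β = P) (hprod : α * β = Q) (n : ℕ) :
    (lucasU P Q n : A) * (α - β) = α ^ n - β ^ n := by
  induction n using Nat.twoStepInduction with
  | zero => simp [lucasU]
  | one => simp [lucasU]
  | more n ih₀ ih₁ =>
    simp only [lucasU, Int.cast_sub, Int.cast_mul]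
    linear_combination (P : A) * ih₁ - (Q : A) * ih₀ - (α ^ (n + 1) - β ^ (n + 1)) * hsum
      + (α ^ n - β ^ n) * hprod

theorem lucasV_eq_add (hsum : α + β = P) (hprod : α * β = Q) (n : ℕ) :
    (lucasV P Q n : A) = α ^ n + β ^ n := by
  induction n using Nat.twoStepInduction with
  | zero => norm_num [lucasV]
  | one => simp [lucasV, hsum]
  | more n ih₀ ih₁ =>
    simp only [lucasV, Int.cast_sub, Int.cast_mul]
    linear_combination (P : A) * ih₁ - (Q : A) * ih₀ - (α ^ (n + 1) + β ^ (n + 1)) * hsum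
      + (α ^ n + β ^ n) * hprod

theorem lucasU_mul_lucasV_succ_mul_sub (hsum : α + β = P) (hprod : α * β = Q) (m : ℕ) :
    ((lucasU P Q m * lucasV P Q (m + 1) : ℤ) : A) * (α - β)
      = ((lucasU P Q (2 * m + 1) - Q ^ m : ℤ) : A) * (α - β) := by
  push_cast
  rw [lucasV_eq_add hsum hprod, ← hprod]
  linear_combination (α ^ (m + 1) + β ^ (m + 1)) * lucasU_mul_sub hsum hprod m
    - lucasU_mul_sub hsum hprod (2 * m + 1)

end Binet

open QuadraticAlgebra

section Omega

variable {R : Type*} [CommRing R] {P Q : ℤ}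

local notation "𝔸" => QuadraticAlgebra R (-Q : R) (P : R)

theorem omega_mul_sub_omega : (ω : 𝔸) * ((P : 𝔸) - ω) = (Q : 𝔸) := by
  ext <;> simp

theorem omega_sub_sq : (ω - ((P : 𝔸) - ω)) ^ 2 = ((P ^ 2 - 4 * Q : ℤ) : 𝔸) := by
  ext <;> simp [sq] <;> ring

theorem intCast_eq_of_mul_omega_sub [IsDomain R] (h2 : (2 : R) ≠ 0) {x y : ℤ}
    (h : (x : 𝔸) * (ω - ((P : 𝔸) - ω)) = (y : 𝔸) * (ω - ((P : 𝔸) - ω))) : (x : R) = y := by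
  have him := congrArg QuadraticAlgebra.im h
  simp only [im_mul, re_intCast, im_intCast, omega_re, omega_im, re_sub, im_sub] at him
  exact mul_left_cancel₀ h2 (by linear_combination him)

end Omega

theorem lucasU_mul_lucasV_succ (P Q : ℤ) (m : ℕ) :
    lucasU P Q m * lucasV P Q (m + 1) = lucasU P Q (2 * m + 1) - Q ^ m := by
  simpa using intCast_eq_of_mul_omega_sub two_ne_zero <| lucasU_mul_lucasV_succ_mul_sub
    (α := (ω : QuadraticAlgebra ℤ (-Q) P)) (β := (P : QuadraticAlgebra ℤ (-Q) P) - ω)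
    (add_sub_cancel _ _) omega_mul_sub_omega m

theorem lucasU_prime_modEq (P Q : ℤ) {p : ℕ} (hp : p.Prime) (hodd : p ≠ 2) :
    lucasU P Q p ≡ (P ^ 2 - 4 * Q) ^ ((p - 1) / 2) [ZMOD p] := by
  have := Fact.mk hp
  let A := QuadraticAlgebra (ZMod p) (-Q) P
  have : CharP A p := charP_of_injective_algebraMap QuadraticAlgebra.algebraMap_injective p
  have hp_eq : 2 * ((p - 1) / 2) + 1 = p := by have := hp.odd_of_ne_two hodd; grind
  set δ : A := ω - ((P : A) - ω)
  rw [← ZMod.intCast_eq_intCast_iff]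
  have h2 : (2 : ZMod p) ≠ 0 := Ring.two_ne_zero (by rwa [ZMod.ringChar_zmod_n])
  refine intCast_eq_of_mul_omega_sub (P := P) (Q := Q) h2 ?_
  calc ((lucasU P Q p : ℤ) : A) * δ = ω ^ p - ((P : A) - ω) ^ p :=
        lucasU_mul_sub (add_sub_cancel _ _) omega_mul_sub_omega p
    _ = δ ^ p := (sub_pow_char ..).symm
    _ = (δ ^ 2) ^ ((p - 1) / 2) * δ := by rw [← pow_mul, ← pow_succ, hp_eq]
    _ = _ := by rw [omega_sub_sq]; push_cast; ring

theorem lucasUV_half_mod_general (P Q : ℤ) (p : ℕ) (hp : p.Prime) (hodd : p ≠ 2) :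
    (P ^ 2 - 4 * Q) ^ ((p - 1) / 2) - Q ^ ((p - 1) / 2) ≡
      lucasU P Q ((p - 1) / 2) * lucasV P Q ((p + 1) / 2) [ZMOD p] := by
  have hp_eq : 2 * ((p - 1) / 2) + 1 = p := by have := hp.odd_of_ne_two hodd; grind
  rw [show (p + 1) / 2 = (p - 1) / 2 + 1 by omega, lucasU_mul_lucasV_succ, hp_eq]
  exact ((lucasU_prime_modEq P Q hp hodd).sub_right _).symm

theorem lucasUV_half_mod (P Q : ℤ) (p : ℕ) (hp : p.Prime) (hodd : p ≠ 2)
    (hdvd : ¬ (p : ℤ) ∣ 2 * P * Q * (P ^ 2 - 4 * Q)) :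
    (P ^ 2 - 4 * Q) ^ ((p - 1) / 2) - Q ^ ((p - 1) / 2) ≡
      lucasU P Q ((p - 1) / 2) * lucasV P Q ((p + 1) / 2) [ZMOD p] :=
  lucasUV_half_mod_general P Q p hp hodd
end

section
/- Let p be an odd prime not dividing 2PQD. Then P·(P^{p-1} - Q^{(p-1)/2}) ≡ D · U_{(p-1)/2} · U_{(p+1)/2} (mod p). -/
open Polynomial

section roots

variable {R : Type*} [CommRing R] {P Q : ℤ} {a b : R}

theorem lucasU_mul_sub_s12 (hadd : a + b = P) (hmul : a * b = Q) (n : ℕ) :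
    (lucasU P Q n : R) * (a - b) = a ^ n - b ^ n := by
  induction n using Nat.twoStepInduction with
  | zero => simp [lucasU]
  | one => simp [lucasU]
  | more n ih₀ ih₁ =>
    calc (lucasU P Q (n + 2) : R) * (a - b)
        = P * ((lucasU P Q (n + 1) : R) * (a - b)) - Q * ((lucasU P Q n : R) * (a - b)) := by
          rw [lucasU]; push_cast; ring
      _ = a ^ (n + 2) - b ^ (n + 2) := by
          rw [ih₀, ih₁, ← hadd, ← hmul]; ring

theorem discr_eq_sub_sq (hadd : a + b = P) (hmul : a * b = Q) :
    ((P ^ 2 - 4 * Q : ℤ) : R) = (a - b) ^ 2 := by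
  push_cast
  rw [← hadd, ← hmul]
  ring

theorem discr_mul_lucasU_mul_lucasU_succ (hadd : a + b = P) (hmul : a * b = Q) (k : ℕ) :
    ((P ^ 2 - 4 * Q : ℤ) : R) * lucasU P Q k * lucasU P Q (k + 1) =
      a ^ (2 * k + 1) + b ^ (2 * k + 1) - (Q : R) ^ k * P := by
  calc ((P ^ 2 - 4 * Q : ℤ) : R) * lucasU P Q k * lucasU P Q (k + 1)
      = ((lucasU P Q k : R) * (a - b)) * ((lucasU P Q (k + 1) : R) * (a - b)) := by
        rw [discr_eq_sub_sq hadd hmul]; ring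
    _ = a ^ (2 * k + 1) + b ^ (2 * k + 1) - (Q : R) ^ k * P := by
        rw [lucasU_mul_sub_s12 hadd hmul, lucasU_mul_sub_s12 hadd hmul, ← hadd, ← hmul]; ring

theorem discr_mul_lucasU_pred_div_two_mul_lucasU_succ_div_two {p : ℕ} [ExpChar R p] (hp : Odd p)
    (hadd : a + b = P) (hmul : a * b = Q) :
    ((P ^ 2 - 4 * Q : ℤ) : R) * lucasU P Q ((p - 1) / 2) * lucasU P Q ((p + 1) / 2) =
      P * (P ^ (p - 1) - Q ^ ((p - 1) / 2)) := by
  obtain ⟨k, rfl⟩ := hp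
  rw [show (2 * k + 1 - 1) / 2 = k by omega, show (2 * k + 1 + 1) / 2 = k + 1 by omega,
    Nat.add_sub_cancel, discr_mul_lucasU_mul_lucasU_succ hadd hmul, ← add_pow_expChar, hadd]
  ring

end roots

theorem AdjoinRoot.root_mul_sub_root {K : Type*} [CommRing K] (c d : K) :
    root (X ^ 2 - C c * X + C d) * (of _ c - root (X ^ 2 - C c * X + C d)) =
      of (X ^ 2 - C c * X + C d) d := by
  have h := eval₂_root (X ^ 2 - C c * X + C d)
  simp only [eval₂_add, eval₂_sub, eval₂_mul, eval₂_pow, eval₂_X, eval₂_C] at h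
  linear_combination -h

theorem lucasUU_half_mod_general (P Q : ℤ) (p : ℕ) (hp : p.Prime) (hodd : p ≠ 2) :
    P * (P ^ (p - 1) - Q ^ ((p - 1) / 2)) ≡
      (P ^ 2 - 4 * Q) * lucasU P Q ((p - 1) / 2) * lucasU P Q ((p + 1) / 2) [ZMOD p] := by
  have := Fact.mk hp
  let f : (ZMod p)[X] := X ^ 2 - C (P : ZMod p) * X + C (Q : ZMod p)
  have : Nontrivial (AdjoinRoot f) := AdjoinRoot.nontrivial f <| by
    rw [show f.degree = 2 by unfold f; compute_degree!]; decide
  have : CharP (AdjoinRoot f) p := charP_of_injective_algebraMap' (ZMod p) p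
  rw [← ZMod.intCast_eq_intCast_iff]
  apply (algebraMap (ZMod p) (AdjoinRoot f)).injective
  have key := discr_mul_lucasU_pred_div_two_mul_lucasU_succ_div_two (hp.odd_of_ne_two hodd)
    (a := AdjoinRoot.root f) (b := AdjoinRoot.of f P - AdjoinRoot.root f) (P := P) (Q := Q)
    (by simp) (by simpa using AdjoinRoot.root_mul_sub_root (P : ZMod p) (Q : ZMod p))
  simp only [map_intCast]
  push_cast at key ⊢
  exact key.symm

theorem lucasUU_half_mod (P Q : ℤ) (p : ℕ) (hp : p.Prime) (hodd : p ≠ 2)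
    (hdvd : ¬ (p : ℤ) ∣ 2 * P * Q * (P ^ 2 - 4 * Q)) :
    P * (P ^ (p - 1) - Q ^ ((p - 1) / 2)) ≡
      (P ^ 2 - 4 * Q) * lucasU P Q ((p - 1) / 2) * lucasU P Q ((p + 1) / 2) [ZMOD p] :=
  lucasUU_half_mod_general P Q p hp hodd
end

section
/- Let p be an odd prime, C an integer with p ∤ C(C² - 4), ε = ((C² - 4)/p) the Legendre symbol, n a nonnegative integer, and d = gcd(n, p - ε). Then the congruence V_n(x, 1) ≡ C (mod p) has an integer solution x if and only if p divides U_{(p-ε)/d}(C + 2, C + 2). -/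
section binet
variable {R : Type*} [CommRing R] (f : ℤ →+* R) (P Q : ℤ) (a b : R)
  (hs : a + b = f P) (hm : a * b = f Q)

include hs hm in
lemma lucasV_binet : ∀ n : ℕ, f (lucasV P Q n) = a ^ n + b ^ n := by
  have key : ∀ n : ℕ, f (lucasV P Q n) = a ^ n + b ^ n ∧
      f (lucasV P Q (n+1)) = a ^ (n+1) + b ^ (n+1) := by
    intro n
    induction n with
    | zero => refine ⟨by simp [lucasV]; ring, by simp [lucasV, ← hs]⟩
    | succ k ih =>
      refine ⟨ih.2, ?_⟩
      show f (lucasV P Q (k+2)) = _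
      rw [lucasV, map_sub, map_mul, map_mul, ← hs, ← hm, ih.1, ih.2]
      ring
  exact fun n => (key n).1

include hs hm in
lemma lucasU_binet : ∀ n : ℕ, (a - b) * f (lucasU P Q n) = a ^ n - b ^ n := by
  have key : ∀ n : ℕ, (a - b) * f (lucasU P Q n) = a ^ n - b ^ n ∧
      (a - b) * f (lucasU P Q (n+1)) = a ^ (n+1) - b ^ (n+1) := by
    intro n
    induction n with
    | zero => constructor <;> simp [lucasU]
    | succ k ih =>
      refine ⟨ih.2, ?_⟩
      show (a - b) * f (lucasU P Q (k+2)) = _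
      rw [lucasU, map_sub, map_mul, map_mul, mul_sub, mul_left_comm, mul_left_comm ((a-b)) (f Q),
        ih.1, ih.2, ← hs, ← hm]
      ring
  exact fun n => (key n).1
end binet

open Polynomial in
lemma fixed_mem {p : ℕ} [Fact p.Prime] {K : Type*} [Field K] [Algebra (ZMod p) K]
    (y : K) (hy : y ^ p = y) : ∃ a : ZMod p, algebraMap (ZMod p) K a = y := by
  classical
  set g := algebraMap (ZMod p) K
  have hg : Function.Injective g := (algebraMap (ZMod p) K).injective
  have hplt : 1 < p := (Fact.out : p.Prime).one_lt
  set q : K[X] := X ^ p - X with hq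
  have hq0 : q ≠ 0 := FiniteField.X_pow_card_sub_X_ne_zero K hplt
  have hqdeg : q.natDegree = p := FiniteField.X_pow_card_sub_X_natDegree_eq K hplt
  set T : Finset K := Finset.univ.image g with hT
  have hTsub : T ⊆ q.roots.toFinset := by
    intro z hz
    simp only [hT, Finset.mem_image] at hz
    obtain ⟨a, -, rfl⟩ := hz
    rw [Multiset.mem_toFinset, mem_roots hq0]
    simp [hq, IsRoot, ← map_pow, ZMod.pow_card]
  have hcard : q.roots.toFinset.card ≤ p := by
    calc q.roots.toFinset.card ≤ Multiset.card q.roots := q.roots.toFinset_card_le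
    _ ≤ q.natDegree := q.card_roots'
    _ = p := hqdeg
  have hTcard : T.card = p := by
    rw [hT, Finset.card_image_of_injective _ hg, Finset.card_univ, ZMod.card]
  have hEq : T = q.roots.toFinset :=
    Finset.eq_of_subset_of_card_le hTsub (by omega)
  have hy' : y ∈ q.roots.toFinset := by
    rw [Multiset.mem_toFinset, mem_roots hq0]
    simp [hq, IsRoot, hy]
  rw [← hEq] at hy'
  simp only [hT, Finset.mem_image] at hy'
  obtain ⟨a, -, ha⟩ := hy'
  exact ⟨a, ha⟩

open Polynomial in
lemma exists_pair {K : Type*} [Field K] [IsAlgClosed K] (y : K) :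
    ∃ a b : K, a + b = y ∧ a * b = 1 := by
  obtain ⟨r, hr⟩ := IsAlgClosed.exists_root
    (Polynomial.C 1 * X ^ 2 + Polynomial.C (-y) * X + Polynomial.C 1)
    (by rw [Polynomial.degree_quadratic one_ne_zero]; exact two_ne_zero)
  have hr' : r ^ 2 - y * r + 1 = 0 := by
    have := hr; simp [IsRoot] at this; linear_combination this
  refine ⟨r, y - r, by ring, ?_⟩
  have : r * (y - r) = -(r ^ 2 - y * r + 1) + 1 := by ring
  rw [this, hr']; ring

theorem main_thm2 (p : ℕ) [hp : Fact p.Prime] (hodd : p ≠ 2) (C : ℤ)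
    (hdvd : ¬ (p : ℤ) ∣ C * (C ^ 2 - 4)) (ε : ℤ)
    (hε : ε = legendreSym p (C ^ 2 - 4)) (n : ℕ)
    (d : ℕ) (hd : d = Int.gcd (n : ℤ) ((p : ℤ) - ε)) :
    (∃ x : ℤ, lucasV x 1 n ≡ C [ZMOD p]) ↔
      (p : ℤ) ∣ lucasU (C + 2) (C + 2) (((p : ℤ) - ε).toNat / d) := by
  classical
  have hp' : p.Prime := Fact.out
  have hp3 : 3 ≤ p := by
    rcases hp'.two_le.lt_or_eq with h | h
    · omega
    · omega
  -- basic divisibility facts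
  have hpC : ¬ (p : ℤ) ∣ C := fun h => hdvd (dvd_mul_of_dvd_left h _)
  have hpD : ¬ (p : ℤ) ∣ (C ^ 2 - 4) := fun h => hdvd (dvd_mul_of_dvd_right h _)
  have hD0 : ((C ^ 2 - 4 : ℤ) : ZMod p) ≠ 0 := by
    rw [Ne, ZMod.intCast_zmod_eq_zero_iff_dvd]; exact hpD
  have hε1 : ε = 1 ∨ ε = -1 := hε ▸ legendreSym.eq_one_or_neg_one p hD0
  -- N, m, d facts
  set N : ℕ := ((p : ℤ) - ε).toNat with hNdef
  have hNcast : (N : ℤ) = (p : ℤ) - ε := by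
    rcases hε1 with h | h <;> (subst h; omega)
  have hNval : (ε = 1 → N = p - 1) ∧ (ε = -1 → N = p + 1) := by
    constructor <;> (intro h; rw [h] at hNcast; omega)
  have hNpos : 0 < N := by rcases hε1 with h | h <;> (rcases hNval with ⟨h1, h2⟩; first | (have := h1 h; omega) | (have := h2 h; omega))
  have hdgcd : d = Nat.gcd n N := by
    have h' : (p : ℤ) - ε = (N : ℤ) := hNcast.symm
    rw [hd, h', Int.gcd_natCast_natCast]
  have hdpos : 0 < d := by
    rw [hdgcd]; exact Nat.gcd_pos_of_pos_right n hNpos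
  have hddvdN : d ∣ N := hdgcd ▸ Nat.gcd_dvd_right n N
  have hddvdn : d ∣ n := hdgcd ▸ Nat.gcd_dvd_left n N
  set m : ℕ := N / d with hmdef
  have hmd : m * d = N := Nat.div_mul_cancel hddvdN
  have hmpos : 0 < m := by
    rcases Nat.eq_zero_or_pos m with h | h
    · rw [h] at hmd; omega
    · exact h
  -- the field K
  set K := AlgebraicClosure (ZMod p) with hK
  set g : ZMod p →+* K := algebraMap (ZMod p) K with hgdef
  have hg : Function.Injective g := g.injective
  have intK : ∀ z : ℤ, g (z : ZMod p) = (z : K) := fun z => by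
    exact_mod_cast eq_intCast (g.comp (Int.castRingHom (ZMod p))) z
  have zeroiff : ∀ z : ℤ, ((z : K) = 0 ↔ (p : ℤ) ∣ z) := by
    intro z
    rw [← intK, ← map_zero g, hg.eq_iff, ZMod.intCast_zmod_eq_zero_iff_dvd]
  have h2K : (2 : K) ≠ 0 := by
    have : ((2 : ℤ) : K) ≠ 0 := by
      rw [Ne, zeroiff]
      intro h
      have := Int.le_of_dvd (by norm_num) h
      omega
    exact_mod_cast this
  -- roots α, β of z² - Cz + 1
  obtain ⟨α, β, hs, hm⟩ := exists_pair ((C : ℤ) : K)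
  have hα0 : α ≠ 0 := fun h => by simp [h] at hm
  have hβ0 : β ≠ 0 := fun h => by simp [h] at hm
  have hdiff : (α - β) ^ 2 = ((C ^ 2 - 4 : ℤ) : K) := by
    push_cast
    have : (α - β) ^ 2 = (α + β) ^ 2 - 4 * (α * β) := by ring
    rw [this, hs, hm]; push_cast; ring
  have hdne : α - β ≠ 0 := by
    intro h
    apply hpD
    rw [← zeroiff, ← hdiff, h]
    ring
  have hαβ : α ≠ β := sub_ne_zero.mp hdne
  -- Frobenius facts
  have hfrobInt : ∀ z : ℤ, ((z : K)) ^ p = (z : K) := fun z => by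
    rw [← intK, ← map_pow, ZMod.pow_card]
  have hfrobAdd : α ^ p + β ^ p = α + β := by
    have h1 : (α + β) ^ p = α ^ p + β ^ p := add_pow_char _ _ _
    rw [← h1, hs, hfrobInt]
  have hfrobSub : α ^ p - β ^ p = ((ε : ℤ) : K) * (α - β) := by
    have h1 : (α - β) ^ p = α ^ p - β ^ p := sub_pow_char _ _
    have h2 : p = (p - 1) + 1 := by omega
    have h3 : (α - β) ^ (p - 1) = ((ε : ℤ) : K) := by
      have h4 : p - 1 = 2 * (p / 2) := by
        have := hp'.odd_of_ne_two hodd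
        rw [Nat.odd_iff] at this
        omega
      rw [h4, pow_mul, hdiff, ← intK, ← map_pow, ← intK, hε]
      exact congrArg g (legendreSym.eq_pow p _).symm
    have h1' := pow_succ (α - β) (p - 1)
    rw [(by omega : p - 1 + 1 = p)] at h1'
    rw [← h1, h1', h3]
  have hαN : α ^ N = 1 := by
    rcases hε1 with h | h
    · -- ε = 1 : α^p = α
      have hε' : ((ε : ℤ) : K) = 1 := by rw [h]; norm_num
      have : (2 : K) * α ^ p = (2 : K) * α := by
        rw [hε'] at hfrobSub
        linear_combination hfrobAdd + hfrobSub
      have hap : α ^ p = α := mul_left_cancel₀ h2K this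
      have hN : N = p - 1 := hNval.1 h
      have hcalc : α ^ (p - 1) * α = 1 * α := by
        rw [← pow_succ, (by omega : p - 1 + 1 = p), hap, one_mul]
      rw [hN]
      exact mul_right_cancel₀ hα0 hcalc
    · -- ε = -1 : α^p = β
      have hε' : ((ε : ℤ) : K) = -1 := by rw [h]; norm_num
      have : (2 : K) * α ^ p = (2 : K) * β := by
        rw [hε'] at hfrobSub
        linear_combination hfrobAdd + hfrobSub
      have hap : α ^ p = β := mul_left_cancel₀ h2K this
      have hN : N = p + 1 := hNval.2 h
      rw [hN, pow_succ, hap, mul_comm β α, hm]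
  have hβN : β ^ N = 1 := by
    have : α ^ N * β ^ N = 1 := by rw [← mul_pow, hm, one_pow]
    rw [hαN, one_mul] at this; exact this
  -- RHS ↔ α ^ m = 1
  have hδ0 : β + 1 ≠ 0 := by
    intro h
    have hβval : β = -1 := eq_neg_of_add_eq_zero_left h
    have hαval : α = -1 := by
      have hm' := hm
      rw [hβval, mul_neg_one] at hm'
      rw [← neg_eq_iff_eq_neg]
      exact hm'
    have : ((C + 2 : ℤ) : K) = 0 := by
      push_cast
      rw [← hs, hαval, hβval]; ring
    rw [zeroiff] at this
    apply hpD
    have : (C ^ 2 - 4 : ℤ) = (C + 2) * (C - 2) := by ring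
    rw [this]
    exact dvd_mul_of_dvd_left ‹(p:ℤ) ∣ C + 2› _
  have hRHS : ((p : ℤ) ∣ lucasU (C + 2) (C + 2) m) ↔ α ^ m = 1 := by
    have hb := lucasU_binet (Int.castRingHom K) (C + 2) (C + 2) (α + 1) (β + 1)
      (by rw [eq_intCast]; push_cast; rw [← hs]; ring)
      (by rw [eq_intCast]; push_cast; linear_combination hs + hm) m
    have hsum : ((α + 1) - (β + 1)) = α - β := by ring
    rw [hsum] at hb
    rw [← zeroiff]
    have hcast : ((lucasU (C + 2) (C + 2) m : ℤ) : K) = Int.castRingHom K (lucasU (C + 2) (C + 2) m) := rfl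
    rw [hcast]
    constructor
    · intro h
      have h1 : (α + 1) ^ m = (β + 1) ^ m := by
        have hb' := hb
        rw [h, mul_zero] at hb'
        exact sub_eq_zero.mp hb'.symm
      have h2 : α + 1 = α * (β + 1) := by
        rw [mul_add, hm]; ring
      rw [h2, mul_pow] at h1
      have h3 : (β + 1) ^ m ≠ 0 := pow_ne_zero m hδ0
      have h4 : α ^ m * (β + 1) ^ m = 1 * (β + 1) ^ m := by rw [h1, one_mul]
      exact mul_right_cancel₀ h3 h4
    · intro h
      have h2 : α + 1 = α * (β + 1) := by rw [mul_add, hm]; ring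
      have h1 : (α + 1) ^ m - (β + 1) ^ m = 0 := by
        rw [h2, mul_pow, h, one_mul, sub_self]
      rw [h1] at hb
      rcases mul_eq_zero.mp hb with h' | h'
      · exact absurd h' hdne
      · exact h'
  rw [hRHS]
  -- key False lemma
  have keyfalse : ∀ u : K, (u = α ∨ u = β) → u ^ (p - 1) = 1 → u ^ (p + 1) = 1 → False := by
    intro u hu h1 h2
    have hu2 : u ^ 2 = 1 := by
      have hpa := pow_add u (p - 1) 2
      rw [(by omega : p - 1 + 2 = p + 1)] at hpa
      rw [h1, one_mul] at hpa
      rw [← hpa, h2]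
    rcases hu with rfl | rfl
    · exact hαβ (mul_left_cancel₀ hα0 (show u * u = u * β by rw [hm, ← hu2]; ring))
    · exact hαβ (mul_right_cancel₀ hβ0 (show α * u = u * u by rw [hm, ← hu2]; ring))
  constructor
  · -- forward
    rintro ⟨x, hx⟩
    have hx' : ((lucasV x 1 n : ℤ) : ZMod p) = ((C : ℤ) : ZMod p) :=
      (ZMod.intCast_eq_intCast_iff _ _ _).mpr hx
    have hxK : ((lucasV x 1 n : ℤ) : K) = ((C : ℤ) : K) := by
      rw [← intK, ← intK, hx']
    obtain ⟨s, t, hst, hstm⟩ := exists_pair ((x : ℤ) : K)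
    have hs0 : s ≠ 0 := fun h => by simp [h] at hstm
    have hV := lucasV_binet (Int.castRingHom K) x 1 s t
      (by rw [eq_intCast]; exact hst) (by rw [eq_intCast]; push_cast; exact hstm) n
    have hVc : Int.castRingHom K (lucasV x 1 n) = ((lucasV x 1 n : ℤ) : K) := eq_intCast _ _
    have hsum : s ^ n + t ^ n = α + β := by
      rw [← hV, hVc, hxK, ← hs]
    have hu : s ^ n = α ∨ s ^ n = β := by
      have hfact : (s ^ n - α) * (s ^ n - β) = 0 := by
        have hexp : (s ^ n - α) * (s ^ n - β)
            = (s ^ n) ^ 2 - (α + β) * s ^ n + α * β := by ring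
        rw [hexp, ← hsum, hm]
        have hexp2 : (s ^ n) ^ 2 - (s ^ n + t ^ n) * s ^ n + 1 = 1 - (s * t) ^ n := by
          rw [mul_pow]; ring
        rw [hexp2, hstm, one_pow, sub_self]
      rcases mul_eq_zero.mp hfact with h | h
      · exact Or.inl (sub_eq_zero.mp h)
      · exact Or.inr (sub_eq_zero.mp h)
    have hsq : s ^ 2 = ((x : ℤ) : K) * s - 1 := by
      linear_combination s * hst - hstm
    have hsp : s ^ p = s ∨ s ^ p = t := by
      have h2p : (s ^ 2) ^ p = ((x : ℤ) : K) * s ^ p - 1 := by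
        rw [hsq, sub_pow_char, mul_pow, hfrobInt, one_pow]
      have hz : (s ^ p - s) * (s ^ p - t) = 0 := by
        have hexp : (s ^ p - s) * (s ^ p - t)
            = (s ^ 2) ^ p - (s + t) * s ^ p + s * t := by
          rw [← pow_mul, mul_comm 2 p, pow_mul]; ring
        rw [hexp, h2p, hst, hstm]; ring
      rcases mul_eq_zero.mp hz with h | h
      · exact Or.inl (sub_eq_zero.mp h)
      · exact Or.inr (sub_eq_zero.mp h)
    have hspow : s ^ (p - 1) = 1 ∨ s ^ (p + 1) = 1 := by
      rcases hsp with h | h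
      · left
        have hcalc := pow_succ s (p - 1)
        rw [(by omega : p - 1 + 1 = p), h] at hcalc
        have : s ^ (p - 1) * s = 1 * s := by rw [← hcalc, one_mul]
        exact mul_right_cancel₀ hs0 this
      · right
        rw [pow_succ, h, mul_comm t s, hstm]
    have huN : (s ^ n) ^ N = 1 := by
      rcases hu with h | h
      · rw [h, hαN]
      · rw [h, hβN]
    have hgoal_of : s ^ N = 1 → α ^ m = 1 := by
      intro hsN
      have hnd : n / d * d = n := Nat.div_mul_cancel hddvdn
      have hnm : n * m = N * (n / d) := by
        calc n * m = (n / d * d) * m := by rw [hnd]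
        _ = (m * d) * (n / d) := by ring
        _ = N * (n / d) := by rw [hmd]
      have hupow : (s ^ n) ^ m = 1 := by
        rw [← pow_mul, hnm, pow_mul, hsN, one_pow]
      rcases hu with h | h
      · rw [h] at hupow; exact hupow
      · rw [h] at hupow
        have hab : α ^ m * β ^ m = 1 := by rw [← mul_pow, hm, one_pow]
        rw [hupow, mul_one] at hab; exact hab
    rcases hε1 with h | h
    · have hN : N = p - 1 := hNval.1 h
      rcases hspow with h' | h'
      · exact hgoal_of (by rw [hN]; exact h')
      · exfalso
        refine keyfalse (s ^ n) hu ?_ ?_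
        · rw [← hN]; exact huN
        · rw [← pow_mul, mul_comm, pow_mul, h', one_pow]
    · have hN : N = p + 1 := hNval.2 h
      rcases hspow with h' | h'
      · exfalso
        refine keyfalse (s ^ n) hu ?_ ?_
        · rw [← pow_mul, mul_comm, pow_mul, h', one_pow]
        · rw [← hN]; exact huN
      · exact hgoal_of (by rw [hN]; exact h')
  · -- backward
    intro hαm
    have hpN : ¬ p ∣ N := by
      intro hpd
      have hle := Nat.le_of_dvd hNpos hpd
      rcases hε1 with h | h
      · have := hNval.1 h; omega
      · have hN : N = p + 1 := hNval.2 h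
        rw [hN] at hpd
        have h1 : p ∣ 1 := by
          have h2 := Nat.dvd_sub hpd (dvd_refl p)
          rwa [(by omega : p + 1 - p = 1)] at h2
        have := Nat.le_of_dvd one_pos h1
        omega
    haveI : NeZero ((N : K)) := ⟨by
      rw [Ne, CharP.cast_eq_zero_iff K p N]
      exact hpN⟩
    obtain ⟨ζ, hζ⟩ := HasEnoughRootsOfUnity.exists_primitiveRoot K N
    have hζ0 : ζ ≠ 0 := hζ.ne_zero hNpos.ne'
    have hζN : ζ ^ N = 1 := hζ.pow_eq_one
    haveI : NeZero m := ⟨hmpos.ne'⟩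
    have hζd : IsPrimitiveRoot (ζ ^ d) m := hζ.pow hNpos (by rw [← hmd]; ring)
    obtain ⟨i, him, hi⟩ := hζd.eq_pow_of_pow_eq_one hαm
    have hdZ : (d : ℤ) = (n : ℤ) * Int.gcdA (n : ℤ) (N : ℤ)
        + (N : ℤ) * Int.gcdB (n : ℤ) (N : ℤ) := by
      have hbez := Int.gcd_eq_gcd_ab (n : ℤ) (N : ℤ)
      rw [← hbez, Int.gcd_natCast_natCast, ← hdgcd]
    set a' : ℤ := Int.gcdA (n : ℤ) (N : ℤ) with ha'
    set b' : ℤ := Int.gcdB (n : ℤ) (N : ℤ) with hb'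
    set s : K := ζ ^ (a' * (i : ℤ)) with hsdef
    have hζzN : ζ ^ ((N : ℕ) : ℤ) = 1 := by rw [zpow_natCast, hζN]
    have hs0 : s ≠ 0 := zpow_ne_zero _ hζ0
    have hsn : s ^ n = α := by
      have h1 : s ^ n = ζ ^ (a' * (i : ℤ) * (n : ℤ)) := by
        rw [hsdef, ← zpow_natCast (ζ ^ (a' * (i : ℤ))) n, ← zpow_mul]
      have h2 : a' * (i : ℤ) * (n : ℤ)
          = ((d * i : ℕ) : ℤ) + ((N : ℕ) : ℤ) * (-(b' * (i : ℤ))) := by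
        push_cast
        linear_combination (-(i : ℤ)) * hdZ
      rw [h1, h2, zpow_add₀ hζ0, zpow_mul, hζzN, one_zpow, mul_one,
        zpow_natCast, pow_mul, hi]
    have hsN : s ^ N = 1 := by
      rw [hsdef, ← zpow_natCast (ζ ^ (a' * (i : ℤ))) N, ← zpow_mul,
        mul_comm (a' * (i : ℤ)) ((N : ℕ) : ℤ), zpow_mul, hζzN, one_zpow]
    set t : K := s⁻¹ with htdef
    have hstm : s * t = 1 := mul_inv_cancel₀ hs0
    have hyp : (s + t) ^ p = s + t := by
      have hadd : (s + t) ^ p = s ^ p + t ^ p := add_pow_char _ _ _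
      rcases hε1 with h | h
      · have hN : N = p - 1 := hNval.1 h
        have hsp : s ^ p = s := by
          have h1 := pow_succ s N
          rw [hN, (by omega : p - 1 + 1 = p)] at h1
          rw [h1, ← hN, hsN, one_mul]
        have htp : t ^ p = t := by rw [htdef, inv_pow, hsp]
        rw [hadd, hsp, htp]
      · have hN : N = p + 1 := hNval.2 h
        have hsp : s ^ p = t := by
          have h1 := pow_succ s p
          rw [(by omega : p + 1 = N)] at h1
          rw [hsN] at h1
          rw [htdef]
          exact eq_inv_of_mul_eq_one_left h1.symm
        have htp : t ^ p = s := by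
          rw [htdef, inv_pow, hsp, htdef, inv_inv]
        rw [hadd, hsp, htp, add_comm]
    obtain ⟨a, ha⟩ := fixed_mem (s + t) hyp
    refine ⟨(a.val : ℤ), ?_⟩
    apply (ZMod.intCast_eq_intCast_iff _ _ _).mp
    apply hg
    rw [intK, intK]
    have hxa : (((a.val : ℤ) : ℤ) : ZMod p) = a := by
      rw [Int.cast_natCast, ZMod.natCast_val, ZMod.cast_id]
    have hxK : (((a.val : ℤ) : ℤ) : K) = s + t := by
      rw [← intK, hxa, ha]
    have hV := lucasV_binet (Int.castRingHom K) ((a.val : ℤ)) 1 s t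
      (by rw [eq_intCast, hxK]) (by rw [eq_intCast]; push_cast; exact hstm) n
    have hVc : Int.castRingHom K (lucasV ((a.val : ℤ)) 1 n)
        = ((lucasV ((a.val : ℤ)) 1 n : ℤ) : K) := eq_intCast _ _
    have hβα : β = α⁻¹ := eq_inv_of_mul_eq_one_right hm
    have htn : t ^ n = β := by
      rw [htdef, inv_pow, hsn, hβα]
    rw [← hVc, hV, hsn, htn, hs]
end
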